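/- arXiv:1307.0028 — 4 statements merged into one kernel-verified Lean document; each statement's English description precedes it below -/
import Mathlib

section
/- If φ : ℝ → ℝ is twice continuously differentiable, not identically zero, satisfies −(β − ν₀²/3)·φ″(x) − 2ν_KdV·φ(x) + (3/2)·(ω²/3 + 1)·φ(x)² = 0 for every x ∈ ℝ, and φ(x) → 0 as x → ∞, then there exists y ∈ ℝ such that φ(x) = φ_KdV(x + y) for all x ∈ ℝ; conversely, every translate φ_KdV(· + y) is such a solution. In other words, the set of nontrivial decaying solutions of this ordinary differential equation is exactly D_KdV = {φ_KdV(· + y) : y ∈ ℝ}. -/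
/-!
Writing `φ x = -A * u (k * x)` for suitable `k, A > 0` turns the equation into
`u'' = 4u - 6u²`, whose energy `u'² - 4u² + 4u³` is conserved. Since `u → 0`, the mean value
theorem gives `u' → 0` along a sequence, so the energy vanishes. A zero of `u` is then a double
zero, and uniqueness for the first-order system forces `u ≡ 0`; hence `u` has a sign. A negative
solution either decreases, contradicting `u → 0`, or satisfies `u' ≥ 2(-u)^{3/2}` and blows up
in finite backward time. A positive one passes through a point with `0 < u < 1` and `u' < 0`,
which lies on the orbit of `sech²`, and uniqueness gives `u = sech²(· + y)`.
-/

open Filter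

noncomputable def sech (x : ℝ) : ℝ := 1 / Real.cosh x

open Set Topology

theorem ODE_solution_unique_univ_of_locallyLipschitz {E : Type*} [NormedAddCommGroup E]
    [NormedSpace ℝ E] {v : E → E} (hv : LocallyLipschitz v) {f g : ℝ → E} {t₀ : ℝ}
    (hf : ∀ t, HasDerivAt f (v (f t)) t) (hg : ∀ t, HasDerivAt g (v (g t)) t)
    (heq : f t₀ = g t₀) : f = g := by
  funext t
  have hf_cont : Continuous f := continuous_iff_continuousAt.2 fun t => (hf t).continuousAt
  have hg_cont : Continuous g := continuous_iff_continuousAt.2 fun t => (hg t).continuousAt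
  set I := Icc (min t t₀ - 1) (max t t₀ + 1)
  have hK : IsCompact (f '' I ∪ g '' I) :=
    (isCompact_Icc.image hf_cont).union (isCompact_Icc.image hg_cont)
  obtain ⟨L, hL⟩ := hv.locallyLipschitzOn.exists_lipschitzOnWith_of_compact hK
  refine ODE_solution_unique_of_mem_Ioo (v := fun _ => v) (fun _ _ => hL) (t₀ := t₀) ?_
    (fun s hs => ⟨hf s, Or.inl (mem_image_of_mem f (Ioo_subset_Icc_self hs))⟩)
    (fun s hs => ⟨hg s, Or.inr (mem_image_of_mem g (Ioo_subset_Icc_self hs))⟩) heq ?_ <;>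
  constructor <;>
    linarith [min_le_left t t₀, min_le_right t t₀, le_max_left t t₀, le_max_right t t₀]

lemma exists_tendsto_deriv_comp_zero {f : ℝ → ℝ} (hf : Differentiable ℝ f) {a : ℝ}
    (hlim : Tendsto f atTop (𝓝 a)) :
    ∃ ξ : ℝ → ℝ, Tendsto ξ atTop atTop ∧ Tendsto (fun x => deriv f (ξ x)) atTop (𝓝 0) := by
  have hmvt (x : ℝ) : ∃ c ∈ Ioo x (x + 1), deriv f c = (f (x + 1) - f x) / (x + 1 - x) :=
    exists_deriv_eq_slope f (by linarith) hf.continuous.continuousOn hf.differentiableOn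
  choose ξ hξ hξf using hmvt
  refine ⟨ξ, tendsto_atTop_mono (fun x => (hξ x).1.le) tendsto_id, ?_⟩
  have hdiff : Tendsto (fun x => f (x + 1) - f x) atTop (𝓝 (a - a)) :=
    (hlim.comp (tendsto_atTop_add_const_right _ 1 tendsto_id)).sub hlim
  simpa [hξf] using hdiff

lemma exists_nonneg_of_four_mul_neg_cube_le_deriv_sq {u : ℝ → ℝ} (hu : Differentiable ℝ u)
    (hd : ∀ x, 0 < deriv u x) (hsq : ∀ x, 4 * (-u x) ^ 3 ≤ deriv u x ^ 2) : ∃ x, 0 ≤ u x := by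
  by_contra! hneg
  -- `(-u)^{-1/2}` grows at least at unit rate, so it would turn negative in finite backward time.
  have hw (x : ℝ) : 0 < -u x := by linarith [hneg x]
  have hsqrt (x : ℝ) : 0 < √(-u x) := Real.sqrt_pos.2 (hw x)
  have hP (x : ℝ) : 0 < 2 * -u x * √(-u x) := by have := hw x; have := hsqrt x; positivity
  have hG (x : ℝ) : HasDerivAt (fun x => (√(-u x))⁻¹ - x)
      (deriv u x / (2 * -u x * √(-u x)) - 1) x := by
    have hneg' : HasDerivAt (fun x => -u x) (-deriv u x) x := (hu x).hasDerivAt.neg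
    refine ((hneg'.sqrt (hw x).ne').inv (hsqrt x).ne' |>.sub (hasDerivAt_id x)).congr_deriv ?_
    have h3 : √(-u x) ^ 3 = -u x * √(-u x) := by rw [pow_succ, Real.sq_sqrt (hw x).le]
    have := (hneg x).ne
    field_simp
    rw [h3]
    field_simp
  have hG1 (x : ℝ) : 1 ≤ deriv u x / (2 * -u x * √(-u x)) := by
    have hP2 : (2 * -u x * √(-u x)) ^ 2 = 4 * (-u x) ^ 3 := by
      rw [mul_pow, Real.sq_sqrt (hw x).le]; ring
    rw [le_div_iff₀ (hP x), one_mul]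
    exact (pow_le_pow_iff_left₀ (hP x).le (hd x).le two_ne_zero).1 (hP2 ▸ hsq x)
  have hmono : Monotone fun x => (√(-u x))⁻¹ - x :=
    monotone_of_deriv_nonneg (fun x => (hG x).differentiableAt)
      fun x => by rw [(hG x).deriv]; linarith [hG1 x]
  have h := hmono (show -(√(-u 0))⁻¹ - 1 ≤ 0 by linarith [inv_pos.2 (hsqrt 0)])
  have := inv_pos.2 (hsqrt (-(√(-u 0))⁻¹ - 1))
  simp only at h
  linarith

noncomputable def solitonField (p : ℝ × ℝ) : ℝ × ℝ := (p.2, 4 * p.1 - 6 * p.1 ^ 2)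

lemma locallyLipschitz_solitonField : LocallyLipschitz solitonField :=
  ContDiff.locallyLipschitz (𝕂 := ℝ) (by unfold solitonField; fun_prop)

structure SolvesSolitonODE (u : ℝ → ℝ) : Prop where
  contDiff : ContDiff ℝ 2 u
  deriv_deriv : ∀ x, deriv (deriv u) x = 4 * u x - 6 * u x ^ 2

lemma solvesSolitonODE_zero : SolvesSolitonODE fun _ => 0 where
  contDiff := contDiff_const
  deriv_deriv x := by simp

namespace SolvesSolitonODE

variable {u w : ℝ → ℝ}

lemma differentiable (hu : SolvesSolitonODE u) : Differentiable ℝ u :=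
  hu.contDiff.differentiable (by norm_num)

lemma differentiable_deriv (hu : SolvesSolitonODE u) : Differentiable ℝ (deriv u) :=
  ((contDiff_succ_iff_deriv (n := 1)).1 hu.contDiff).2.2.differentiable one_ne_zero

lemma hasDerivAt (hu : SolvesSolitonODE u) (x : ℝ) : HasDerivAt u (deriv u x) x :=
  (hu.differentiable x).hasDerivAt

lemma hasDerivAt_deriv (hu : SolvesSolitonODE u) (x : ℝ) :
    HasDerivAt (deriv u) (4 * u x - 6 * u x ^ 2) x :=
  hu.deriv_deriv x ▸ (hu.differentiable_deriv x).hasDerivAt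

lemma hasDerivAt_phase (hu : SolvesSolitonODE u) (x : ℝ) :
    HasDerivAt (fun t => (u t, deriv u t)) (solitonField (u x, deriv u x)) x :=
  (hu.hasDerivAt x).prodMk (hu.hasDerivAt_deriv x)

lemma eq_of_eq_of_deriv_eq (hu : SolvesSolitonODE u) (hw : SolvesSolitonODE w) {t₀ : ℝ}
    (h₀ : u t₀ = w t₀) (h₁ : deriv u t₀ = deriv w t₀) : u = w := by
  have h := ODE_solution_unique_univ_of_locallyLipschitz locallyLipschitz_solitonField
    hu.hasDerivAt_phase hw.hasDerivAt_phase (t₀ := t₀) (by rw [h₀, h₁])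
  funext x
  exact congrArg Prod.fst (congrFun h x)

lemma comp_add_const (hu : SolvesSolitonODE u) (y : ℝ) : SolvesSolitonODE fun x => u (x + y) where
  contDiff := hu.contDiff.comp (contDiff_id.add contDiff_const)
  deriv_deriv x := by
    rw [show deriv (fun x => u (x + y)) = fun x => deriv u (x + y) from
      funext (deriv_comp_add_const u y), deriv_comp_add_const, hu.deriv_deriv]

lemma energy_eq (hu : SolvesSolitonODE u) (x : ℝ) :
    deriv u x ^ 2 - 4 * u x ^ 2 + 4 * u x ^ 3 = deriv u 0 ^ 2 - 4 * u 0 ^ 2 + 4 * u 0 ^ 3 := by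
  have hE (t : ℝ) : HasDerivAt (fun t => deriv u t ^ 2 - 4 * u t ^ 2 + 4 * u t ^ 3) 0 t := by
    refine ((((hu.hasDerivAt_deriv t).pow 2).sub (((hu.hasDerivAt t).pow 2).const_mul 4)).add
      (((hu.hasDerivAt t).pow 3).const_mul 4)).congr_deriv ?_
    push_cast
    ring
  exact is_const_of_deriv_eq_zero (fun t => (hE t).differentiableAt) (fun t => (hE t).deriv) x 0

lemma deriv_sq_eq (hu : SolvesSolitonODE u) (hlim : Tendsto u atTop (𝓝 0)) (x : ℝ) :
    deriv u x ^ 2 = 4 * u x ^ 2 * (1 - u x) := by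
  set E := deriv u 0 ^ 2 - 4 * u 0 ^ 2 + 4 * u 0 ^ 3
  have hE (t : ℝ) : deriv u t ^ 2 = E + 4 * u t ^ 2 - 4 * u t ^ 3 := by
    linarith [hu.energy_eq t]
  obtain ⟨ξ, hξ, hdξ⟩ := exists_tendsto_deriv_comp_zero hu.differentiable hlim
  have huξ := hlim.comp hξ
  have h₁ : Tendsto (fun t => deriv u (ξ t) ^ 2) atTop (𝓝 (E + 4 * 0 ^ 2 - 4 * 0 ^ 3)) := by
    simp_rw [hE]
    exact (tendsto_const_nhds.add ((huξ.pow 2).const_mul 4)).sub ((huξ.pow 3).const_mul 4)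
  have hE0 : E = 0 := by simpa using tendsto_nhds_unique h₁ (by simpa using hdξ.pow 2)
  linear_combination hE x + hE0

lemma ne_zero (hu : SolvesSolitonODE u) (hlim : Tendsto u atTop (𝓝 0)) (hne : u ≠ 0) (x : ℝ) :
    u x ≠ 0 := by
  intro hx
  have hdx : deriv u x = 0 := by simpa [hx] using hu.deriv_sq_eq hlim x
  exact hne (hu.eq_of_eq_of_deriv_eq solvesSolitonODE_zero hx (by simpa using hdx))

lemma pos (hu : SolvesSolitonODE u) (hlim : Tendsto u atTop (𝓝 0)) (hne : u ≠ 0) (x : ℝ) :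
    0 < u x := by
  have hnz := hu.ne_zero hlim hne
  by_contra! hx
  have hneg (t : ℝ) : u t < 0 := by
    by_contra! ht
    obtain ⟨s, hs⟩ := intermediate_value_univ x t hu.contDiff.continuous ⟨hx, ht⟩
    exact hnz s hs
  have hd (t : ℝ) : deriv u t ≠ 0 := fun h => by
    have := hu.deriv_sq_eq hlim t
    rw [h] at this
    nlinarith [hneg t]
  rcases hasDerivWithinAt_forall_lt_or_forall_gt_of_forall_ne convex_univ
    (fun t _ => (hu.hasDerivAt t).hasDerivWithinAt) (fun t _ => hd t) with hdneg | hdpos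
  · have := (strictAnti_of_deriv_neg fun t => hdneg t trivial).antitone.le_of_tendsto hlim 0
    linarith [hneg 0]
  · obtain ⟨t, ht⟩ := exists_nonneg_of_four_mul_neg_cube_le_deriv_sq hu.differentiable
      (fun t => hdpos t trivial) fun t => by rw [hu.deriv_sq_eq hlim t]; nlinarith [hneg t]
    linarith [hneg t]

end SolvesSolitonODE

lemma sech_sq_eq_inv_cosh_sq (x : ℝ) : sech x ^ 2 = (Real.cosh x ^ 2)⁻¹ := by
  rw [sech, one_div, inv_pow]

lemma hasDerivAt_cosh_pow (n : ℕ) (x : ℝ) :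
    HasDerivAt (fun x => Real.cosh x ^ n) (n * Real.cosh x ^ (n - 1) * Real.sinh x) x :=
  (Real.hasDerivAt_cosh x).pow n

lemma hasDerivAt_sech_sq (x : ℝ) :
    HasDerivAt (fun x => sech x ^ 2) (-2 * Real.sinh x / Real.cosh x ^ 3) x := by
  simp_rw [sech_sq_eq_inv_cosh_sq]
  have := (Real.cosh_pos x).ne'
  refine ((hasDerivAt_cosh_pow 2 x).inv (by positivity)).congr_deriv ?_
  field_simp
  push_cast
  ring

lemma hasDerivAt_neg_two_mul_sinh_div_cosh_cube (x : ℝ) :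
    HasDerivAt (fun x => -2 * Real.sinh x / Real.cosh x ^ 3)
      (4 * sech x ^ 2 - 6 * (sech x ^ 2) ^ 2) x := by
  have := (Real.cosh_pos x).ne'
  refine (((Real.hasDerivAt_sinh x).const_mul (-2)).div (hasDerivAt_cosh_pow 3 x)
    (by positivity)).congr_deriv ?_
  rw [sech_sq_eq_inv_cosh_sq]
  field_simp
  push_cast
  linear_combination (-6 * Real.cosh x ^ 2) * Real.cosh_sq_sub_sinh_sq x

lemma solvesSolitonODE_sech_sq : SolvesSolitonODE fun x => sech x ^ 2 where
  contDiff := by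
    simp_rw [sech_sq_eq_inv_cosh_sq]
    exact (Real.contDiff_cosh.pow 2).inv fun x => by positivity
  deriv_deriv x := by
    rw [funext fun x => (hasDerivAt_sech_sq x).deriv]
    exact (hasDerivAt_neg_two_mul_sinh_div_cosh_cube x).deriv

lemma tendsto_sech_sq_atTop : Tendsto (fun x => sech x ^ 2) atTop (𝓝 0) := by
  have hcosh : Tendsto Real.cosh atTop atTop :=
    tendsto_atTop_mono (fun x => by rw [Real.cosh_eq]; linarith [Real.exp_pos (-x)])
      (Real.tendsto_exp_atTop.atTop_div_const two_pos)
  simp_rw [sech_sq_eq_inv_cosh_sq]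
  exact ((tendsto_pow_atTop two_ne_zero).comp hcosh).inv_tendsto_atTop

lemma exists_sech_sq_eq_and_deriv_eq {a b : ℝ} (ha₀ : 0 < a) (ha₁ : a < 1) (hb : b < 0)
    (hab : b ^ 2 = 4 * a ^ 2 * (1 - a)) :
    ∃ s, sech s ^ 2 = a ∧ deriv (fun x => sech x ^ 2) s = b := by
  set s := Real.arsinh √(a⁻¹ - 1)
  have hr : 0 ≤ a⁻¹ - 1 := by rw [sub_nonneg, one_le_inv₀ ha₀]; exact ha₁.le
  have hsinh : Real.sinh s = √(a⁻¹ - 1) := Real.sinh_arsinh _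
  have hcosh : Real.cosh s ^ 2 = a⁻¹ := by
    rw [Real.cosh_arsinh, Real.sq_sqrt (by positivity), Real.sq_sqrt hr]
    ring
  have hsech : sech s ^ 2 = a := by rw [sech_sq_eq_inv_cosh_sq, hcosh, inv_inv]
  refine ⟨s, hsech, ?_⟩
  rw [(hasDerivAt_sech_sq s).deriv]
  have hs : 0 < s := Real.arsinh_pos_iff.2 (Real.sqrt_pos.2 (sub_pos.2 ((one_lt_inv₀ ha₀).2 ha₁)))
  have hneg : -2 * Real.sinh s / Real.cosh s ^ 3 < 0 :=
    div_neg_of_neg_of_pos (by linarith [Real.sinh_pos_iff.2 hs]) (pow_pos (Real.cosh_pos s) 3)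
  have hsq : (-2 * Real.sinh s / Real.cosh s ^ 3) ^ 2 = b ^ 2 := by
    have := (Real.cosh_pos s).ne'
    rw [hab, div_pow, mul_pow, hsinh, Real.sq_sqrt hr, ← pow_mul, show 3 * 2 = 2 * 3 by rfl,
      pow_mul, hcosh]
    field_simp
    ring
  exact (sq_eq_sq_iff_eq_or_eq_neg.1 hsq).resolve_right fun h => by linarith

lemma SolvesSolitonODE.exists_eq_sech_sq {u : ℝ → ℝ} (hu : SolvesSolitonODE u)
    (hlim : Tendsto u atTop (𝓝 0)) (hne : u ≠ 0) : ∃ y, u = fun x => sech (x + y) ^ 2 := by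
  have hpos := hu.pos hlim hne
  obtain ⟨X, hX⟩ := eventually_atTop.1 (hlim.eventually_lt_const one_pos)
  obtain ⟨Y, hY⟩ := eventually_atTop.1 (hlim.eventually_lt_const (hpos X))
  have hXZ : X < max X Y + 1 := by linarith [le_max_left X Y]
  obtain ⟨ξ, hξ, hslope⟩ := exists_deriv_eq_slope u hXZ hu.contDiff.continuous.continuousOn
    hu.differentiable.differentiableOn
  have hdξ : deriv u ξ < 0 := by
    rw [hslope]
    exact div_neg_of_neg_of_pos (by linarith [hY (max X Y + 1) (by linarith [le_max_right X Y])])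
      (by linarith)
  obtain ⟨s, hs, hds⟩ := exists_sech_sq_eq_and_deriv_eq (hpos ξ) (hX ξ hξ.1.le) hdξ
    (hu.deriv_sq_eq hlim ξ)
  refine ⟨s - ξ, hu.eq_of_eq_of_deriv_eq (solvesSolitonODE_sech_sq.comp_add_const (s - ξ))
    (t₀ := ξ) ?_ ?_⟩
  · simp [hs]
  · rw [deriv_comp_add_const (fun x => sech x ^ 2), add_sub_cancel, hds]

theorem solvesSolitonODE_and_tendsto_iff (u : ℝ → ℝ) :
    SolvesSolitonODE u ∧ u ≠ 0 ∧ Tendsto u atTop (𝓝 0) ↔ ∃ y, u = fun x => sech (x + y) ^ 2 := by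
  refine ⟨fun ⟨hu, hne, hlim⟩ => hu.exists_eq_sech_sq hlim hne, ?_⟩
  rintro ⟨y, rfl⟩
  refine ⟨solvesSolitonODE_sech_sq.comp_add_const y, fun h => ?_,
    tendsto_sech_sq_atTop.comp (tendsto_atTop_add_const_right _ y tendsto_id)⟩
  simpa [sech] using congrFun h (-y)

section Rescaling

variable {a k : ℝ} {u : ℝ → ℝ}

lemma contDiff_const_mul_comp_mul_iff (ha : a ≠ 0) (hk : k ≠ 0) {n : WithTop ℕ∞} :
    ContDiff ℝ n (fun x => a * u (k * x)) ↔ ContDiff ℝ n u := by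
  refine ⟨fun h => ?_, fun h => contDiff_const.mul (h.comp (contDiff_const.mul contDiff_id))⟩
  have hu : u = fun t => a⁻¹ * (a * u (k * (k⁻¹ * t))) := by
    funext t
    simp [ha, hk]
  rw [hu]
  exact contDiff_const.mul (h.comp (contDiff_const.mul contDiff_id))

lemma const_mul_comp_mul_ne_zero_iff (ha : a ≠ 0) (hk : k ≠ 0) :
    (fun x => a * u (k * x)) ≠ 0 ↔ u ≠ 0 := by
  refine not_congr ⟨fun h => funext fun t => ?_, fun h => by ext; simp [h]⟩
  simpa [ha, hk] using congrFun h (k⁻¹ * t)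

lemma tendsto_const_mul_comp_mul_iff (ha : a ≠ 0) (hk : 0 < k) :
    Tendsto (fun x => a * u (k * x)) atTop (𝓝 0) ↔ Tendsto u atTop (𝓝 0) := by
  refine ⟨fun h => ?_, fun h => by
    simpa using (h.comp (tendsto_id.const_mul_atTop hk)).const_mul a⟩
  simpa [Function.comp_def, ha, hk.ne'] using
    (h.comp (tendsto_id.const_mul_atTop (inv_pos.2 hk))).const_mul a⁻¹

lemma exists_const_mul_comp_mul_eq_iff (ha : a ≠ 0) (hk : k ≠ 0) (w : ℝ → ℝ) :
    (∃ y, (fun x => a * u (k * x)) = fun x => a * w (k * (x + y))) ↔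
      ∃ y, u = fun x => w (x + y) := by
  have key (y : ℝ) : ((fun x => a * u (k * x)) = fun x => a * w (k * (x + y))) ↔
      u = fun x => w (x + k * y) := by
    refine ⟨fun h => funext fun t => ?_, fun h => funext fun x => by rw [h, mul_add]⟩
    simpa [ha, hk, mul_add] using congrFun h (k⁻¹ * t)
  simp_rw [key]
  exact ⟨fun ⟨y, h⟩ => ⟨k * y, h⟩, fun ⟨y, h⟩ => ⟨y / k, by rwa [mul_div_cancel₀ _ hk]⟩⟩

lemma deriv_deriv_const_mul_comp_mul (a k : ℝ) (u : ℝ → ℝ) (x : ℝ) :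
    deriv (deriv fun x => a * u (k * x)) x = a * k ^ 2 * deriv (deriv u) (k * x) := by
  have h₁ : deriv (fun x => a * u (k * x)) = fun x => a * k * deriv u (k * x) := by
    funext x
    simp only [deriv_const_mul_field', deriv_comp_mul_left, smul_eq_mul, mul_assoc]
  simp only [h₁, deriv_const_mul_field', deriv_comp_mul_left, smul_eq_mul]
  ring

lemma kdv_profile_ode_rescale_iff {c ν d A : ℝ} (hc : c ≠ 0) (hA : A ≠ 0) (hk : k ≠ 0)
    (hν : ν = -2 * c * k ^ 2) (hdA : 3 * d * A = 12 * c * k ^ 2) :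
    (∀ x, -c * deriv (deriv fun x => -A * u (k * x)) x - 2 * ν * (-A * u (k * x)) +
        3 / 2 * d * (-A * u (k * x)) ^ 2 = 0) ↔
      ∀ t, deriv (deriv u) t = 4 * u t - 6 * u t ^ 2 := by
  have key (x : ℝ) : -c * deriv (deriv fun x => -A * u (k * x)) x - 2 * ν * (-A * u (k * x)) +
      3 / 2 * d * (-A * u (k * x)) ^ 2 =
      c * A * k ^ 2 * (deriv (deriv u) (k * x) - (4 * u (k * x) - 6 * u (k * x) ^ 2)) := by
    rw [deriv_deriv_const_mul_comp_mul, hν]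
    linear_combination (A * u (k * x) ^ 2 / 2) * hdA
  have hcAk : c * A * k ^ 2 ≠ 0 := by positivity
  simp_rw [key, mul_eq_zero_iff_left hcAk, sub_eq_zero]
  exact ⟨fun h t => by simpa [hk] using h (k⁻¹ * t), fun h x => h (k * x)⟩

end Rescaling

lemma sqrt_three_mul_rpow_one_sixth :
    √3 * (3 / 16 : ℝ) ^ ((1 : ℝ) / 6) = 4 * (3 / 16 : ℝ) ^ ((2 : ℝ) / 3) := by
  have h : (3 / 16 : ℝ) ^ ((1 : ℝ) / 2) = √3 / 4 := by
    rw [← Real.sqrt_eq_rpow, Real.sqrt_div' _ (by norm_num : (0 : ℝ) ≤ 16),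
      show (16 : ℝ) = 4 ^ 2 by norm_num, Real.sqrt_sq (by norm_num)]
  rw [show (2 : ℝ) / 3 = 1 / 6 + 1 / 2 by norm_num, Real.rpow_add (by norm_num), h]
  ring

lemma self_mul_rpow_one_third {x : ℝ} (hx : 0 < x) :
    x * x ^ ((1 : ℝ) / 3) = x ^ ((4 : ℝ) / 3) := by
  rw [show (4 : ℝ) / 3 = 1 + 1 / 3 by norm_num, Real.rpow_add hx, Real.rpow_one]

lemma exists_kdv_soliton_scaling {c d ω ν : ℝ} {φK : ℝ → ℝ} (hc : 0 < c) (hd : 0 < d)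
    (hν : ν = -2 * (3 / 16 : ℝ) ^ ((2 : ℝ) / 3) * d ^ ((4 : ℝ) / 3) /
      (c ^ ((1 : ℝ) / 3) * (ω ^ 2 + 4) ^ ((1 : ℝ) / 3)))
    (hφK : ∀ x, φK x = -Real.sqrt 3 * (3 / 16 : ℝ) ^ ((1 : ℝ) / 6) * d ^ ((1 : ℝ) / 3) /
      (c ^ ((1 : ℝ) / 3) * (ω ^ 2 + 4) ^ ((1 : ℝ) / 3)) *
      sech ((3 / 16 : ℝ) ^ ((1 : ℝ) / 3) * d ^ ((2 : ℝ) / 3) * x /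
        (c ^ ((2 : ℝ) / 3) * (ω ^ 2 + 4) ^ ((1 : ℝ) / 6))) ^ 2) :
    ∃ k A, 0 < k ∧ 0 < A ∧ ν = -2 * c * k ^ 2 ∧ 3 * d * A = 12 * c * k ^ 2 ∧
      φK = fun x => -A * sech (k * x) ^ 2 := by
  have hq : (0 : ℝ) < ω ^ 2 + 4 := by positivity
  set k := (3 / 16 : ℝ) ^ ((1 : ℝ) / 3) * d ^ ((2 : ℝ) / 3) /
    (c ^ ((2 : ℝ) / 3) * (ω ^ 2 + 4) ^ ((1 : ℝ) / 6))
  set A := √3 * (3 / 16 : ℝ) ^ ((1 : ℝ) / 6) * d ^ ((1 : ℝ) / 3) /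
    (c ^ ((1 : ℝ) / 3) * (ω ^ 2 + 4) ^ ((1 : ℝ) / 3))
  have hk2 : k ^ 2 = (3 / 16 : ℝ) ^ ((2 : ℝ) / 3) * d ^ ((4 : ℝ) / 3) /
      (c ^ ((4 : ℝ) / 3) * (ω ^ 2 + 4) ^ ((1 : ℝ) / 3)) := by
    simp only [k, div_pow, mul_pow]
    rw [← Real.rpow_mul_natCast (by norm_num), ← Real.rpow_mul_natCast hd.le,
      ← Real.rpow_mul_natCast hc.le, ← Real.rpow_mul_natCast hq.le]
    norm_num
  have hc3 := (Real.rpow_pos_of_pos hc ((1 : ℝ) / 3)).ne'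
  have hq3 := (Real.rpow_pos_of_pos hq ((1 : ℝ) / 3)).ne'
  refine ⟨k, A, by positivity, by positivity, ?_, ?_, funext fun x => ?_⟩
  · rw [hν, hk2, ← self_mul_rpow_one_third hc]
    field_simp
  · rw [hk2, ← self_mul_rpow_one_third hc, ← self_mul_rpow_one_third hd]
    simp only [A, sqrt_three_mul_rpow_one_sixth]
    field_simp
    ring
  · rw [hφK, mul_div_right_comm _ x]
    ring

theorem stmt1_general (ν₀ ω β : ℝ) (hβ : ν₀ ^ 2 / 3 < β)
    (c d νKdV : ℝ) (hc : c = β - ν₀ ^ 2 / 3) (hd : d = ω ^ 2 / 3 + 1)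
    (hν : νKdV = -2 * (3 / 16 : ℝ) ^ ((2 : ℝ) / 3) * d ^ ((4 : ℝ) / 3) /
      (c ^ ((1 : ℝ) / 3) * (ω ^ 2 + 4) ^ ((1 : ℝ) / 3)))
    (φK : ℝ → ℝ)
    (hφK : ∀ x, φK x = -Real.sqrt 3 * (3 / 16 : ℝ) ^ ((1 : ℝ) / 6) * d ^ ((1 : ℝ) / 3) /
      (c ^ ((1 : ℝ) / 3) * (ω ^ 2 + 4) ^ ((1 : ℝ) / 3)) *
      sech ((3 / 16 : ℝ) ^ ((1 : ℝ) / 3) * d ^ ((2 : ℝ) / 3) * x /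
        (c ^ ((2 : ℝ) / 3) * (ω ^ 2 + 4) ^ ((1 : ℝ) / 6))) ^ 2) :
    ∀ φ : ℝ → ℝ,
      (ContDiff ℝ 2 φ ∧ φ ≠ 0 ∧
        (∀ x : ℝ, -(β - ν₀ ^ 2 / 3) * deriv (deriv φ) x - 2 * νKdV * φ x +
          (3 / 2) * (ω ^ 2 / 3 + 1) * φ x ^ 2 = 0) ∧
        Tendsto φ atTop (nhds 0))
      ↔ ∃ y : ℝ, φ = fun x => φK (x + y) := by
  have hc₀ : 0 < c := by rw [hc]; linarith
  obtain ⟨k, A, hk, hA, hνk, hdA, rfl⟩ :=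
    exists_kdv_soliton_scaling hc₀ (by rw [hd]; positivity) hν hφK
  have hA' : -A ≠ 0 := neg_ne_zero.2 hA.ne'
  intro φ
  obtain ⟨u, rfl⟩ : ∃ u, φ = fun x => -A * u (k * x) :=
    ⟨fun t => -A⁻¹ * φ (k⁻¹ * t), funext fun x => by field_simp⟩
  rw [← hc, ← hd]
  beta_reduce
  rw [contDiff_const_mul_comp_mul_iff hA' hk.ne', const_mul_comp_mul_ne_zero_iff hA' hk.ne',
    kdv_profile_ode_rescale_iff hc₀.ne' hA.ne' hk.ne' hνk hdA,
    tendsto_const_mul_comp_mul_iff hA' hk,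
    exists_const_mul_comp_mul_eq_iff hA' hk.ne' (fun t => sech t ^ 2),
    ← solvesSolitonODE_and_tendsto_iff]
  exact ⟨fun ⟨h₁, h₂, h₃, h₄⟩ => ⟨⟨h₁, h₃⟩, h₂, h₄⟩, fun ⟨⟨h₁, h₃⟩, h₂, h₄⟩ => ⟨h₁, h₂, h₃, h₄⟩⟩

theorem stmt1 (ν₀ ω β : ℝ) (hν₀ : 0 < ν₀) (hβ : ν₀ ^ 2 / 3 < β)
    (c d νKdV : ℝ) (hc : c = β - ν₀ ^ 2 / 3) (hd : d = ω ^ 2 / 3 + 1)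
    (hν : νKdV = -2 * (3 / 16 : ℝ) ^ ((2 : ℝ) / 3) * d ^ ((4 : ℝ) / 3) /
      (c ^ ((1 : ℝ) / 3) * (ω ^ 2 + 4) ^ ((1 : ℝ) / 3)))
    (φK : ℝ → ℝ)
    (hφK : ∀ x, φK x = -Real.sqrt 3 * (3 / 16 : ℝ) ^ ((1 : ℝ) / 6) * d ^ ((1 : ℝ) / 3) /
      (c ^ ((1 : ℝ) / 3) * (ω ^ 2 + 4) ^ ((1 : ℝ) / 3)) *
      sech ((3 / 16 : ℝ) ^ ((1 : ℝ) / 3) * d ^ ((2 : ℝ) / 3) * x /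
        (c ^ ((2 : ℝ) / 3) * (ω ^ 2 + 4) ^ ((1 : ℝ) / 6))) ^ 2) :
    ∀ φ : ℝ → ℝ,
      (ContDiff ℝ 2 φ ∧ φ ≠ 0 ∧
        (∀ x : ℝ, -(β - ν₀ ^ 2 / 3) * deriv (deriv φ) x - 2 * νKdV * φ x +
          (3 / 2) * (ω ^ 2 / 3 + 1) * φ x ^ 2 = 0) ∧
        Tendsto φ atTop (nhds 0))
      ↔ ∃ y : ℝ, φ = fun x => φK (x + y) :=
  stmt1_general ν₀ ω β hβ c d νKdV hc hd hν φK hφK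
end

section
/- If β > β_c, then g(k) := 1 + βk² − ων₀ − ν₀²·f(k) satisfies g(k) > 0 for every k ≠ 0 and g(0) = 0. In other words, for strong surface tension g(k) ≥ 0 for all k ∈ ℝ, with equality precisely when k = 0 (so the dispersion curve ν(k) attains its global minimum only at k₀ = 0, where ν(0) = ν₀). -/
/-! Since `1 - ω ν₀ = ν₀²` and `β_c = ν₀²/3`, the function `g` equals
`ν₀² (1 - f(k)) + β k²`, so everything reduces to the bound `k coth k ≤ 1 + k²/3`. That bound,
i.e. `3 k cosh k ≤ (3 + k²) sinh k` for `k ≥ 0`, follows from monotonicity: the difference has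
derivative `k (k cosh k - sinh k)`, and `k cosh k - sinh k` in turn has derivative `k sinh k ≥ 0`.
Then `g(k) ≥ (β - β_c) k² > 0` for `k ≠ 0`. -/

/-- `f(k) = |k|·coth|k|`, extended by `f(0) = 1`. -/
noncomputable def fdisp (k : ℝ) : ℝ :=
  if k = 0 then 1 else k * Real.cosh k / Real.sinh k

open Real

lemma apply_zero_le_of_hasDerivAt {f f' : ℝ → ℝ} (hf : ∀ x, HasDerivAt f (f' x) x)
    (hf' : ∀ x, 0 < x → 0 ≤ f' x) {x : ℝ} (hx : 0 ≤ x) : f 0 ≤ f x := by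
  refine monotoneOn_of_hasDerivWithinAt_nonneg (convex_Ici 0)
    (fun y _ ↦ (hf y).continuousAt.continuousWithinAt) (fun y _ ↦ (hf y).hasDerivWithinAt)
    (fun y hy ↦ hf' y ?_) Set.self_mem_Ici hx hx
  rwa [interior_Ici] at hy

lemma sinh_le_mul_cosh {x : ℝ} (hx : 0 ≤ x) : sinh x ≤ x * cosh x := by
  have hderiv (y : ℝ) :
      HasDerivAt (fun y ↦ y * cosh y - sinh y) (y * sinh y) y :=
    (((hasDerivAt_id' y).mul (hasDerivAt_cosh y)).sub (hasDerivAt_sinh y)).congr_deriv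
      (by ring)
  have := apply_zero_le_of_hasDerivAt hderiv
    (fun y hy ↦ mul_nonneg hy.le (sinh_nonneg_iff.mpr hy.le)) hx
  simp only [zero_mul, sinh_zero, sub_zero] at this
  linarith

lemma three_mul_mul_cosh_le {x : ℝ} (hx : 0 ≤ x) :
    3 * (x * cosh x) ≤ (3 + x ^ 2) * sinh x := by
  have hderiv (y : ℝ) :
      HasDerivAt (fun y ↦ (3 + y ^ 2) * sinh y - 3 * (y * cosh y))
        (y * (y * cosh y - sinh y)) y :=
    ((((hasDerivAt_pow 2 y).const_add 3).mul (hasDerivAt_sinh y)).sub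
      (((hasDerivAt_id' y).mul (hasDerivAt_cosh y)).const_mul 3)).congr_deriv (by ring)
  have := apply_zero_le_of_hasDerivAt hderiv
    (fun y hy ↦ mul_nonneg hy.le (sub_nonneg.mpr (sinh_le_mul_cosh hy.le))) hx
  simp only [sinh_zero, mul_zero, zero_mul, sub_zero] at this
  linarith

lemma fdisp_neg (k : ℝ) : fdisp (-k) = fdisp k := by
  by_cases hk : k = 0
  · simp [hk]
  · simp only [fdisp, neg_eq_zero, hk, if_false, cosh_neg, sinh_neg, neg_mul, neg_div_neg_eq]

lemma fdisp_le (k : ℝ) : fdisp k ≤ 1 + k ^ 2 / 3 := by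
  wlog hk : 0 ≤ k generalizing k
  · simpa [fdisp_neg] using this (-k) (by linarith)
  rcases hk.eq_or_lt with rfl | hk
  · simp [fdisp]
  rw [fdisp, if_neg hk.ne', div_le_iff₀ (sinh_pos_iff.mpr hk)]
  linarith [three_mul_mul_cosh_le hk.le]

theorem stmt9 (ω β ν₀ βc : ℝ)
    (hν₀ : ν₀ = (-ω + Real.sqrt (ω ^ 2 + 4)) / 2)
    (hβc : βc = (ω ^ 2 + 2 - ω * Real.sqrt (ω ^ 2 + 4)) / 6)
    (hβ : βc < β) :
    (∀ k : ℝ, k ≠ 0 → 0 < 1 + β * k ^ 2 - ω * ν₀ - ν₀ ^ 2 * fdisp k) ∧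
    1 + β * (0 : ℝ) ^ 2 - ω * ν₀ - ν₀ ^ 2 * fdisp 0 = 0 := by
  have hsqrt : √(ω ^ 2 + 4) ^ 2 = ω ^ 2 + 4 := sq_sqrt (by positivity)
  have hν₀_root : 1 - ω * ν₀ = ν₀ ^ 2 := by rw [hν₀]; linear_combination -hsqrt / 4
  have hβc_eq : βc = ν₀ ^ 2 / 3 := by rw [hβc, hν₀]; linear_combination -hsqrt / 12
  refine ⟨fun k hk ↦ ?_, by simp [fdisp, hν₀_root]⟩
  calc 0 < (β - βc) * k ^ 2 := mul_pos (sub_pos.mpr hβ) (by positivity)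
    _ ≤ 1 + β * k ^ 2 - ω * ν₀ - ν₀ ^ 2 * fdisp k := by
      rw [hβc_eq]
      linarith [mul_le_mul_of_nonneg_left (fdisp_le k) (sq_nonneg ν₀)]
end

section
/- Let h₀ ∈ (0,1), let η : ℝ → ℝ be bounded and Lipschitz (with Lipschitz constant L) such that 1 + inf η > h₀, and let K : ℝ → ℝ be a Schwartz function with ∫ K(s) ds = 1. For δ > 0 define η^δ(x, y′) = ∫ K(s)·η(x − δ(1 − y′)s) ds and F^δ(x, y′) = (x, y′(1 + η^δ(x, y′))). Then there exists δ_max > 0, depending only on K, h₀ and L, such that for every δ ∈ (0, δ_max): (i) for each fixed x the map y′ ↦ y′(1 + η^δ(x, y′)) is strictly increasing on [0,1], with y-derivative at least h₀/2 at every y′ ∈ [0,1); (ii) F^δ is a bijection from the closed strip ℝ × [0,1] onto the closed fluid domain {(x, y) ∈ ℝ² : 0 ≤ y ≤ 1 + η(x)}, mapping ℝ × (0,1) onto {(x, y) : 0 < y < 1 + η(x)}. -/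
/-!
Write `A x ε = ∫ K(s) η(x - ε s) ds`, so that `η^δ(x, y') = A x (δ (1 - y'))` and `A x 0 = η x`.
Since `η` is `L`-Lipschitz, `A x` is Lipschitz with constant `Λ = L ∫ |s K(s)| ds`. For `ε ≠ 0`
it is moreover differentiable: by Rademacher's theorem `η` is differentiable off a null set, whose
preimage under `s ↦ x - ε s` is again null, so one may differentiate under the integral sign.
The `y'`-derivative of `y' (1 + A x (δ (1 - y')))` is then at least `1 + η x - 2Λδ > h₀ / 2` as
soon as `4Λδ < h₀`, so each vertical fibre is mapped strictly increasingly and continuously onto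
`[0, 1 + η x]`.
-/

open MeasureTheory Set

noncomputable def kernelAverage (K η : ℝ → ℝ) (x ε : ℝ) : ℝ :=
  ∫ s, K s * η (x - ε * s)

noncomputable def absFirstMoment (K : ℝ → ℝ) : NNReal := (∫ s, |s * K s|).toNNReal

lemma kernelAverage_zero {K : ℝ → ℝ} (hK₁ : ∫ s, K s = 1) (η : ℝ → ℝ) (x : ℝ) :
    kernelAverage K η x 0 = η x := by
  simp [kernelAverage, integral_mul_const, hK₁]

section KernelAverage

variable {K η : ℝ → ℝ} {L : NNReal}

lemma dist_mul_comp_le (hη : LipschitzWith L η) (k x a b s : ℝ) :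
    dist (k * η (x - a * s)) (k * η (x - b * s)) ≤ L * |s * k| * dist a b := by
  rw [dist_eq_norm, ← mul_sub, norm_mul, ← dist_eq_norm]
  calc ‖k‖ * dist (η (x - a * s)) (η (x - b * s))
      ≤ |k| * (L * dist (x - a * s) (x - b * s)) := by
        gcongr
        · rfl
        · exact hη.dist_le_mul _ _
    _ = L * |s * k| * dist a b := by
        rw [Real.dist_eq, Real.dist_eq, abs_mul,
          show x - a * s - (x - b * s) = (b - a) * s by ring, abs_mul, abs_sub_comm]
        ring

variable (hK : Integrable K) (hKs : Integrable fun s => s * K s)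
include hK hKs

lemma integrable_mul_comp (hη : LipschitzWith L η) (x ε : ℝ) :
    Integrable fun s => K s * η (x - ε * s) := by
  refine Integrable.mono' ((hK.norm.const_mul |η x|).add (hKs.norm.const_mul (L * |ε|)))
    (hK.aestronglyMeasurable.mul (hη.continuous.comp (by fun_prop)).aestronglyMeasurable)
    (Filter.Eventually.of_forall fun s => ?_)
  have h := dist_mul_comp_le hη (K s) x ε 0 s
  rw [zero_mul, sub_zero, dist_zero_right, dist_eq_norm] at h
  calc ‖K s * η (x - ε * s)‖
      ≤ ‖K s * η x‖ + ‖K s * η (x - ε * s) - K s * η x‖ := norm_le_norm_add_norm_sub' _ _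
    _ ≤ |η x| * ‖K s‖ + L * |ε| * ‖s * K s‖ := by
        rw [norm_mul, mul_comm ‖K s‖]
        simp only [Real.norm_eq_abs] at h ⊢
        linarith

lemma lipschitzWith_kernelAverage (hη : LipschitzWith L η) (x : ℝ) :
    LipschitzWith (L * absFirstMoment K) (kernelAverage K η x) := by
  refine LipschitzWith.of_dist_le_mul fun a b => ?_
  have hC : (absFirstMoment K : ℝ) = ∫ s, |s * K s| :=
    Real.coe_toNNReal _ (integral_nonneg fun s => abs_nonneg _)
  rw [dist_eq_norm, kernelAverage, kernelAverage,
    ← integral_sub (integrable_mul_comp hK hKs hη x a) (integrable_mul_comp hK hKs hη x b)]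
  calc ‖∫ s, (K s * η (x - a * s) - K s * η (x - b * s))‖
      ≤ ∫ s, L * |s * K s| * dist a b :=
        norm_integral_le_of_norm_le ((hKs.abs.const_mul _).mul_const _)
          (Filter.Eventually.of_forall fun s => by
            rw [← dist_eq_norm]; exact dist_mul_comp_le hη (K s) x a b s)
    _ = (L * absFirstMoment K : NNReal) * dist a b := by
        rw [integral_mul_const, integral_const_mul, NNReal.coe_mul, hC]

lemma differentiableAt_kernelAverage (hη : LipschitzWith L η) (x : ℝ) {ε : ℝ}
    (hε : ε ≠ 0) :
    DifferentiableAt ℝ (kernelAverage K η x) ε := by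
  have hdiff : ∀ᵐ s, DifferentiableAt ℝ η (x - ε * s) :=
    ((quasiMeasurePreserving_sub_left volume x).comp
      (Measure.quasiMeasurePreserving_smul volume hε)).ae hη.ae_differentiableAt_real
  have hlip : ∀ s, LipschitzOnWith (Real.nnabs (L * |s * K s|))
      (fun ε => K s * η (x - ε * s)) univ := fun s => by
    refine (LipschitzWith.of_dist_le_mul fun a b => ?_).lipschitzOnWith
    rw [Real.coe_nnabs, abs_of_nonneg (by positivity)]
    exact dist_mul_comp_le hη (K s) x a b s
  have hderiv : ∀ᵐ s, HasDerivAt (fun ε => K s * η (x - ε * s))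
      (K s * (deriv η (x - ε * s) * -s)) ε := hdiff.mono fun s hs => by
    simpa using
      (hs.hasDerivAt.comp ε (((hasDerivAt_id ε).mul_const s).const_sub x)).const_mul (K s)
  exact (hasDerivAt_integral_of_dominated_loc_of_lip Filter.univ_mem
    (.of_forall fun ε' => (integrable_mul_comp hK hKs hη x ε').aestronglyMeasurable)
    (integrable_mul_comp hK hKs hη x ε)
    (hK.aestronglyMeasurable.mul
      (by fun_prop : Measurable fun s => deriv η (x - ε * s) * -s).aestronglyMeasurable)
    (.of_forall hlip) (hKs.abs.const_mul _) hderiv).2.differentiableAt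

lemma abs_kernelAverage_sub_le (hK₁ : ∫ s, K s = 1) (hη : LipschitzWith L η) (x ε : ℝ) :
    |kernelAverage K η x ε - η x| ≤ L * absFirstMoment K * |ε| := by
  have h := (lipschitzWith_kernelAverage hK hKs hη x).dist_le_mul ε 0
  rwa [kernelAverage_zero hK₁, Real.dist_eq, dist_zero_right, NNReal.coe_mul] at h

end KernelAverage

noncomputable def flatteningHeight (K η : ℝ → ℝ) (δ x y : ℝ) : ℝ :=
  y * (1 + kernelAverage K η x (δ * (1 - y)))

section FlatteningHeight

variable {K η : ℝ → ℝ} {L : NNReal} {δ : ℝ}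

lemma flatteningHeight_zero (x : ℝ) : flatteningHeight K η δ x 0 = 0 := zero_mul _

lemma flatteningHeight_one (hK₁ : ∫ s, K s = 1) (x : ℝ) :
    flatteningHeight K η δ x 1 = 1 + η x := by
  rw [flatteningHeight, sub_self, mul_zero, kernelAverage_zero hK₁, one_mul]

variable (hK : Integrable K) (hKs : Integrable fun s => s * K s) (hη : LipschitzWith L η)
include hK hKs hη

lemma continuous_flatteningHeight (x : ℝ) : Continuous (flatteningHeight K η δ x) :=
  continuous_id.mul (continuous_const.add
    ((lipschitzWith_kernelAverage hK hKs hη x).continuous.comp (by fun_prop)))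

lemma exists_hasDerivAt_flatteningHeight (hK₁ : ∫ s, K s = 1) (hδ : 0 < δ) (x : ℝ) {y : ℝ}
    (hy : y ∈ Ico 0 1) : ∃ D, HasDerivAt (flatteningHeight K η δ x) D y ∧
      1 + η x - 2 * (L * absFirstMoment K) * δ ≤ D := by
  set A := kernelAverage K η x
  set Λ : ℝ := L * absFirstMoment K
  have hε : 0 < δ * (1 - y) := mul_pos hδ (sub_pos.2 hy.2)
  have hA : HasDerivAt A (deriv A (δ * (1 - y))) (δ * (1 - y)) :=
    (differentiableAt_kernelAverage hK hKs hη x hε.ne').hasDerivAt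
  have hε' : HasDerivAt (fun y => δ * (1 - y)) (-δ) y := by
    simpa using ((hasDerivAt_id y).const_sub 1).const_mul δ
  refine ⟨_, ((hasDerivAt_id y).mul ((hA.comp y hε').const_add 1) :), ?_⟩
  have hA' : |deriv A (δ * (1 - y))| ≤ Λ := by
    simpa using norm_deriv_le_of_lipschitz (lipschitzWith_kernelAverage hK hKs hη x)
  have hAε : |A (δ * (1 - y)) - η x| ≤ Λ * (δ * (1 - y)) := by
    simpa only [abs_of_pos hε] using abs_kernelAverage_sub_le hK hKs hK₁ hη x (δ * (1 - y))
  have hΛ : 0 ≤ Λ := by positivity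
  have hslope : y * (deriv A (δ * (1 - y)) * δ) ≤ Λ * δ :=
    calc y * (deriv A (δ * (1 - y)) * δ) ≤ y * (Λ * δ) :=
          mul_le_mul_of_nonneg_left
            (mul_le_mul_of_nonneg_right ((le_abs_self _).trans hA') hδ.le) hy.1
      _ ≤ 1 * (Λ * δ) := mul_le_mul_of_nonneg_right hy.2.le (by positivity)
      _ = Λ * δ := one_mul _
  simp only [id, Function.comp_apply, mul_neg] at hslope ⊢
  nlinarith [(abs_le.1 hAε).1, mul_nonneg (mul_nonneg hΛ hδ.le) hy.1]

lemma strictMonoOn_flatteningHeight (hK₁ : ∫ s, K s = 1) (hδ : 0 < δ) {x : ℝ}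
    (hx : 2 * (L * absFirstMoment K) * δ < 1 + η x) :
    StrictMonoOn (flatteningHeight K η δ x) (Icc 0 1) := by
  refine strictMonoOn_of_deriv_pos (convex_Icc 0 1)
    (continuous_flatteningHeight hK hKs hη x).continuousOn fun y hy => ?_
  rw [interior_Icc] at hy
  obtain ⟨D, hD, hle⟩ :=
    exists_hasDerivAt_flatteningHeight hK hKs hη hK₁ hδ x (Ioo_subset_Ico_self hy)
  rw [hD.deriv]
  linarith

end FlatteningHeight

lemma StrictMonoOn.bijOn_Icc {α δ : Type*} [ConditionallyCompleteLinearOrder α]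
    [TopologicalSpace α] [OrderTopology α] [DenselyOrdered α] [LinearOrder δ] [TopologicalSpace δ]
    [OrderClosedTopology δ] {f : α → δ} {a b : α} (hmono : StrictMonoOn f (Icc a b))
    (hf : ContinuousOn f (Icc a b)) (hab : a ≤ b) : BijOn f (Icc a b) (Icc (f a) (f b)) := by
  rw [← hf.image_Icc_of_monotoneOn hab hmono.monotoneOn]
  exact hmono.injOn.bijOn_image

section Fiberwise

variable {α β γ : Type*} {g : α → β → γ} {s : Set β} {t : α → Set γ}

lemma bijOn_fiberwise (h : ∀ x, BijOn (g x) s (t x)) :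
    BijOn (fun p : α × β => (p.1, g p.1 p.2)) (univ ×ˢ s) {q | q.2 ∈ t q.1} := by
  refine ⟨fun p hp => (h p.1).mapsTo hp.2, ?_, ?_⟩
  · rintro ⟨x, y⟩ hy ⟨x', y'⟩ hy' heq
    obtain ⟨rfl, hg⟩ := Prod.mk.inj heq
    exact Prod.ext rfl ((h x).injOn hy.2 hy'.2 hg)
  · rintro ⟨x, z⟩ hz
    obtain ⟨y, hy, rfl⟩ := (h x).surjOn hz
    exact ⟨(x, y), ⟨mem_univ x, hy⟩, rfl⟩

lemma image_fiberwise (h : ∀ x, g x '' s = t x) :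
    (fun p : α × β => (p.1, g p.1 p.2)) '' (univ ×ˢ s) = {q | q.2 ∈ t q.1} := by
  ext ⟨x, z⟩
  simp only [mem_image, mem_prod, mem_univ, true_and, Prod.exists, Prod.mk.injEq, mem_ofPred_eq,
    ← h x]
  constructor
  · rintro ⟨x', y, hy, rfl, rfl⟩
    exact ⟨y, hy, rfl⟩
  · rintro ⟨y, hy, rfl⟩
    exact ⟨x, y, hy, rfl, rfl⟩

end Fiberwise

theorem stmt12 (h₀ : ℝ) (hh₀ : h₀ ∈ Set.Ioo (0 : ℝ) 1)
    (η : ℝ → ℝ) (L : NNReal) (hLip : LipschitzWith L η)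
    (B : ℝ) (hB : ∀ x, |η x| ≤ B)
    (hinf : h₀ < 1 + ⨅ x : ℝ, η x)
    (K : SchwartzMap ℝ ℝ) (hK : (∫ s : ℝ, K s) = 1)
    (ηδ : ℝ → ℝ → ℝ → ℝ)
    (hηδ : ∀ δ x y, ηδ δ x y = ∫ s : ℝ, K s * η (x - δ * (1 - y) * s))
    (Fδ : ℝ → ℝ × ℝ → ℝ × ℝ)
    (hFδ : ∀ δ p, Fδ δ p = (p.1, p.2 * (1 + ηδ δ p.1 p.2))) :
    ∃ δmax : ℝ, 0 < δmax ∧ ∀ δ : ℝ, 0 < δ → δ < δmax →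
      (∀ x : ℝ, StrictMonoOn (fun y => y * (1 + ηδ δ x y)) (Set.Icc 0 1) ∧
        ∀ y ∈ Set.Ico (0 : ℝ) 1,
          ∃ D : ℝ, HasDerivAt (fun y' => y' * (1 + ηδ δ x y')) D y ∧ h₀ / 2 ≤ D) ∧
      Set.BijOn (Fδ δ) (Set.univ ×ˢ Set.Icc (0 : ℝ) 1)
        {p : ℝ × ℝ | 0 ≤ p.2 ∧ p.2 ≤ 1 + η p.1} ∧
      Fδ δ '' (Set.univ ×ˢ Set.Ioo (0 : ℝ) 1) =
        {p : ℝ × ℝ | 0 < p.2 ∧ p.2 < 1 + η p.1} := by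
  have hK₀ : Integrable K := K.integrable
  have hKs : Integrable fun s => s * K s := by
    refine (integrable_norm_iff (continuous_id.mul K.continuous).aestronglyMeasurable).1 ?_
    simpa [abs_mul] using K.integrable_pow_mul volume 1
  set Λ : ℝ := L * absFirstMoment K
  have hinf_le : ∀ x, ⨅ x, η x ≤ η x :=
    ciInf_le ⟨-B, by rintro _ ⟨x, rfl⟩; linarith [(abs_le.1 (hB x)).1]⟩
  refine ⟨h₀ / (4 * Λ + 1), by have := hh₀.1; positivity, fun δ hδ hδmax => ?_⟩
  have hΛδ : 4 * Λ * δ < h₀ := by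
    rw [lt_div_iff₀ (by positivity)] at hδmax
    linarith
  have hgap : ∀ x, h₀ / 2 < 1 + η x - 2 * Λ * δ := fun x => by linarith [hinf_le x]
  have hfiber : ∀ x, (fun y => y * (1 + ηδ δ x y)) = flatteningHeight K η δ x := fun x => by
    funext y
    rw [hηδ, flatteningHeight, kernelAverage]
  have hF : Fδ δ = fun p => (p.1, flatteningHeight K η δ p.1 p.2) := funext fun p => by
    rw [hFδ, ← hfiber]
  have hmono : ∀ x, StrictMonoOn (flatteningHeight K η δ x) (Icc 0 1) := fun x =>
    strictMonoOn_flatteningHeight hK₀ hKs hLip hK hδ (by linarith [hgap x, hh₀.1])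
  have hcont : ∀ x, ContinuousOn (flatteningHeight K η δ x) (Icc 0 1) := fun x =>
    (continuous_flatteningHeight hK₀ hKs hLip x).continuousOn
  refine ⟨fun x => ⟨hfiber x ▸ hmono x, fun y hy => ?_⟩, ?_, ?_⟩
  · obtain ⟨D, hD, hle⟩ := exists_hasDerivAt_flatteningHeight hK₀ hKs hLip hK hδ x hy
    exact ⟨D, hfiber x ▸ hD, (hgap x).le.trans hle⟩
  · rw [hF]
    refine bijOn_fiberwise (t := fun x => Icc 0 (1 + η x)) fun x => ?_
    simpa only [flatteningHeight_zero, flatteningHeight_one hK] using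
      (hmono x).bijOn_Icc (hcont x) zero_le_one
  · rw [hF]
    refine image_fiberwise (t := fun x => Ioo 0 (1 + η x)) fun x => ?_
    simpa only [flatteningHeight_zero, flatteningHeight_one hK] using
      (hcont x).image_Ioo_of_strictMonoOn zero_le_one (hmono x)
end

section
/- Let k₀ ≥ 0. There exists a constant C > 0, depending only on k₀, such that for every α > 0, every μ ∈ (0,1], every j ∈ {0, 1}, and every measurable function u : ℝ → ℂ, one has ( ∫ |k|^j·|u(k)| dk )² ≤ C·μ^{α}·∫ (1 + μ^{−4α}(|k| − k₀)⁴)·|u(k)|² dk. -/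
open MeasureTheory ProbabilityTheory Real
open scoped NNReal ENNReal

/-!
Weighted Cauchy–Schwarz with the weight `w k = 1 + ((|k| - k₀) / ε) ^ 4`, `ε = μ ^ α`, reduces the
claim to `∫ |k| ^ (2j) / w ≤ C ε`. With `s = (|k| - k₀) / ε` and `ε ≤ 1` one has
`|k| ^ (2j) ≤ (1 + 2 k₀²) (1 + 2 s²)` and `(1 + 2 s²) (1 + s²) ≤ 4 (1 + s⁴)`, so on each half-line
the integrand is dominated by a multiple `ε` of a Cauchy density of scale `ε` centred at `±k₀`.
-/

theorem sq_lintegral_mul_le_mul_lintegral_sq {X : Type*} [MeasurableSpace X] {ν : Measure X}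
    {f g : X → ℝ≥0∞} (hf : AEMeasurable f ν) (hg : AEMeasurable g ν) :
    (∫⁻ x, f x * g x ∂ν) ^ 2 ≤ (∫⁻ x, f x ^ 2 ∂ν) * ∫⁻ x, g x ^ 2 ∂ν := by
  have hCS := ENNReal.lintegral_mul_le_Lp_mul_Lq ν Real.HolderConjugate.two_two hf hg
  have hsq : ∀ A : ℝ≥0∞, (A ^ (1 / (2 : ℝ))) ^ 2 = A := fun A => by
    rw [← ENNReal.rpow_natCast, ← ENNReal.rpow_mul]; norm_num
  simp only [ENNReal.rpow_two, Pi.mul_apply] at hCS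
  calc (∫⁻ x, f x * g x ∂ν) ^ 2
      ≤ ((∫⁻ x, f x ^ 2 ∂ν) ^ (1 / (2 : ℝ)) * (∫⁻ x, g x ^ 2 ∂ν) ^ (1 / (2 : ℝ))) ^ 2 := by
        gcongr
    _ = (∫⁻ x, f x ^ 2 ∂ν) * ∫⁻ x, g x ^ 2 ∂ν := by rw [mul_pow, hsq, hsq]

theorem sq_lintegral_ofReal_mul_le {X : Type*} [MeasurableSpace X] {ν : Measure X}
    {w a b : X → ℝ} (hw : AEMeasurable w ν) (hw0 : ∀ x, 0 < w x) (ha : AEMeasurable a ν)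
    (ha0 : ∀ x, 0 ≤ a x) (hb : AEMeasurable b ν) (hb0 : ∀ x, 0 ≤ b x) :
    (∫⁻ x, ENNReal.ofReal (a x * b x) ∂ν) ^ 2 ≤
      (∫⁻ x, ENNReal.ofReal (a x ^ 2 / w x) ∂ν) * ∫⁻ x, ENNReal.ofReal (w x * b x ^ 2) ∂ν := by
  have hsqrt : ∀ x, √(w x) ≠ 0 := fun x => (Real.sqrt_pos.2 (hw0 x)).ne'
  have hsplit : ∀ x, ENNReal.ofReal (a x * b x) =
      ENNReal.ofReal (a x / √(w x)) * ENNReal.ofReal (√(w x) * b x) := fun x => by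
    rw [← ENNReal.ofReal_mul (div_nonneg (ha0 x) (Real.sqrt_nonneg _))]
    field_simp [hsqrt x]
  have hf : ∀ x, ENNReal.ofReal (a x / √(w x)) ^ 2 = ENNReal.ofReal (a x ^ 2 / w x) := fun x => by
    rw [← ENNReal.ofReal_pow (div_nonneg (ha0 x) (Real.sqrt_nonneg _)), div_pow,
      Real.sq_sqrt (hw0 x).le]
  have hg : ∀ x, ENNReal.ofReal (√(w x) * b x) ^ 2 = ENNReal.ofReal (w x * b x ^ 2) := fun x => by
    rw [← ENNReal.ofReal_pow (mul_nonneg (Real.sqrt_nonneg _) (hb0 x)), mul_pow,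
      Real.sq_sqrt (hw0 x).le]
  simp_rw [hsplit, ← hf, ← hg]
  exact sq_lintegral_mul_le_mul_lintegral_sq (ha.div hw.sqrt).ennreal_ofReal
    (hw.sqrt.mul hb).ennreal_ofReal

theorem pow_sq_div_one_add_pow_four_le {ε : ℝ} (hε0 : 0 < ε) (hε1 : ε ≤ 1) {j : ℕ} (hj : j ≤ 1)
    (k₀ t : ℝ) :
    ((k₀ + t) ^ j) ^ 2 / (1 + (t / ε) ^ 4) ≤ 4 * (1 + 2 * k₀ ^ 2) / (1 + (t / ε) ^ 2) := by
  set s := t / ε with hs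
  have ht : t = ε * s := by rw [hs]; field_simp
  have hts : t ^ 2 ≤ s ^ 2 := by
    rw [ht, mul_pow]
    exact mul_le_of_le_one_left (sq_nonneg s) (pow_le_one₀ hε0.le hε1)
  have hnum : ((k₀ + t) ^ j) ^ 2 ≤ (1 + 2 * k₀ ^ 2) * (1 + 2 * s ^ 2) := by
    have : ((k₀ + t) ^ j) ^ 2 ≤ 1 + (k₀ + t) ^ 2 := by interval_cases j <;> simp [sq_nonneg]
    nlinarith [sq_nonneg (k₀ - t), sq_nonneg k₀, sq_nonneg s]
  have hden : (1 + 2 * s ^ 2) * (1 + s ^ 2) ≤ 4 * (1 + s ^ 4) := by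
    nlinarith [sq_nonneg (s ^ 2 - 1), sq_nonneg s]
  rw [div_le_div_iff₀ (by positivity) (by positivity)]
  calc ((k₀ + t) ^ j) ^ 2 * (1 + s ^ 2)
      ≤ (1 + 2 * k₀ ^ 2) * (1 + 2 * s ^ 2) * (1 + s ^ 2) := by gcongr
    _ ≤ (1 + 2 * k₀ ^ 2) * (4 * (1 + s ^ 4)) := by
        rw [mul_assoc]; gcongr
    _ = 4 * (1 + 2 * k₀ ^ 2) * (1 + s ^ 4) := by ring

theorem div_one_add_sq_eq_mul_cauchyPDFReal (c x₀ : ℝ) {γ : ℝ≥0} (hγ : γ ≠ 0) (x : ℝ) :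
    c / (1 + ((x - x₀) / γ) ^ 2) = c * π * γ * cauchyPDFReal x₀ γ x := by
  have : (γ : ℝ) ≠ 0 := by exact_mod_cast hγ
  rw [cauchyPDFReal_def', NNReal.coe_inv]
  field_simp

theorem pow_sq_div_one_add_pow_four_le_cauchyPDFReal {ε : ℝ≥0} (hε0 : 0 < ε) (hε1 : ε ≤ 1)
    {j : ℕ} (hj : j ≤ 1) (k₀ k : ℝ) :
    (|k| ^ j) ^ 2 / (1 + ((|k| - k₀) / ε) ^ 4) ≤
      4 * (1 + 2 * k₀ ^ 2) * π * ε * (cauchyPDFReal k₀ ε k + cauchyPDFReal (-k₀) ε k) := by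
  have hbump := pow_sq_div_one_add_pow_four_le (ε := ε) hε0 hε1 hj k₀
  rw [mul_add, ← div_one_add_sq_eq_mul_cauchyPDFReal _ _ hε0.ne',
    ← div_one_add_sq_eq_mul_cauchyPDFReal _ _ hε0.ne']
  rcases le_total 0 k with hk | hk
  · have h := hbump (k - k₀)
    rw [add_sub_cancel] at h
    rw [abs_of_nonneg hk]
    exact le_add_of_le_of_nonneg h (by positivity)
  · have h := hbump (-k - k₀)
    rw [add_sub_cancel] at h
    rw [abs_of_nonpos hk, show ((k - -k₀) / ε) ^ 2 = ((-k - k₀) / ε) ^ 2 by ring]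
    exact le_add_of_nonneg_of_le (by positivity) h

theorem lintegral_pow_sq_div_one_add_pow_four_le {ε : ℝ≥0} (hε0 : 0 < ε) (hε1 : ε ≤ 1)
    {j : ℕ} (hj : j ≤ 1) (k₀ : ℝ) :
    ∫⁻ k, ENNReal.ofReal ((|k| ^ j) ^ 2 / (1 + ((|k| - k₀) / ε) ^ 4)) ≤
      ENNReal.ofReal (8 * π * (1 + 2 * k₀ ^ 2) * ε) := by
  set A := 4 * (1 + 2 * k₀ ^ 2) * π * ε
  calc ∫⁻ k, ENNReal.ofReal ((|k| ^ j) ^ 2 / (1 + ((|k| - k₀) / ε) ^ 4))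
      ≤ ∫⁻ k, ENNReal.ofReal A * (cauchyPDF k₀ ε k + cauchyPDF (-k₀) ε k) := by
        refine lintegral_mono fun k => ?_
        rw [cauchyPDF, cauchyPDF, ← ENNReal.ofReal_add (cauchyPDF_pos _ hε0.ne' k).le
          (cauchyPDF_pos _ hε0.ne' k).le, ← ENNReal.ofReal_mul (by positivity)]
        exact ENNReal.ofReal_le_ofReal
          (pow_sq_div_one_add_pow_four_le_cauchyPDFReal hε0 hε1 hj k₀ k)
    _ = ENNReal.ofReal A * 2 := by
        rw [lintegral_const_mul _ (by fun_prop), lintegral_add_left (by fun_prop),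
          lintegral_cauchyPDF_eq_one _ hε0.ne', lintegral_cauchyPDF_eq_one _ hε0.ne',
          one_add_one_eq_two]
    _ = ENNReal.ofReal (8 * π * (1 + 2 * k₀ ^ 2) * ε) := by
        rw [← ENNReal.ofReal_ofNat 2, ← ENNReal.ofReal_mul (by positivity)]
        congr 1
        ring

theorem stmt19_general (k₀ : ℝ) :
    ∃ C : ℝ, 0 < C ∧
      ∀ α μ : ℝ, 0 < α → 0 < μ → μ ≤ 1 →
      ∀ j : ℕ, j ≤ 1 →
      ∀ u : ℝ → ℂ, Measurable u →
        (∫⁻ k : ℝ, ENNReal.ofReal (|k| ^ j * ‖u k‖)) ^ 2 ≤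
          ENNReal.ofReal (C * μ ^ α) *
            ∫⁻ k : ℝ, ENNReal.ofReal ((1 + μ ^ (-(4 * α)) * (|k| - k₀) ^ 4) * ‖u k‖ ^ 2) := by
  refine ⟨8 * π * (1 + 2 * k₀ ^ 2), by positivity, fun α μ hα hμ0 hμ1 j hj u hu => ?_⟩
  set ε : ℝ≥0 := ⟨μ ^ α, (rpow_pos_of_pos hμ0 α).le⟩
  have hε0 : 0 < ε := rpow_pos_of_pos hμ0 α
  have hε1 : ε ≤ 1 := rpow_le_one hμ0.le hμ1 hα.le
  have hεμ : (ε : ℝ) = μ ^ α := rfl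
  have hweight : ∀ x : ℝ, μ ^ (-(4 * α)) * x ^ 4 = (x / ε) ^ 4 := fun x => by
    rw [hεμ, rpow_neg hμ0.le, mul_comm 4 α, rpow_mul hμ0.le, div_pow, rpow_ofNat]
    ring
  simp_rw [hweight]
  calc (∫⁻ k : ℝ, ENNReal.ofReal (|k| ^ j * ‖u k‖)) ^ 2
      ≤ (∫⁻ k, ENNReal.ofReal ((|k| ^ j) ^ 2 / (1 + ((|k| - k₀) / ε) ^ 4))) *
          ∫⁻ k, ENNReal.ofReal ((1 + ((|k| - k₀) / ε) ^ 4) * ‖u k‖ ^ 2) :=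
        sq_lintegral_ofReal_mul_le (by fun_prop) (fun k => by positivity) (by fun_prop)
          (fun k => by positivity) hu.norm.aemeasurable (fun k => norm_nonneg _)
    _ ≤ ENNReal.ofReal (8 * π * (1 + 2 * k₀ ^ 2) * ε) *
          ∫⁻ k, ENNReal.ofReal ((1 + ((|k| - k₀) / ε) ^ 4) * ‖u k‖ ^ 2) := by
        gcongr
        exact lintegral_pow_sq_div_one_add_pow_four_le hε0 hε1 hj k₀

theorem stmt19 (k₀ : ℝ) (hk₀ : 0 ≤ k₀) :
    ∃ C : ℝ, 0 < C ∧
      ∀ α μ : ℝ, 0 < α → 0 < μ → μ ≤ 1 →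
      ∀ j : ℕ, j ≤ 1 →
      ∀ u : ℝ → ℂ, Measurable u →
        (∫⁻ k : ℝ, ENNReal.ofReal (|k| ^ j * ‖u k‖)) ^ 2 ≤
          ENNReal.ofReal (C * μ ^ α) *
            ∫⁻ k : ℝ, ENNReal.ofReal ((1 + μ ^ (-(4 * α)) * (|k| - k₀) ^ 4) * ‖u k‖ ^ 2) :=
  stmt19_general k₀
end
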